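/- arXiv:2207.07704 — 2 statements merged into one kernel-verified Lean document; each statement's English description precedes it below -/
import Mathlib

section
/- Let y₁,…,yₙ be real numbers in [0,1] and let x be a real number with 0 ≤ x ≤ 1 and x ≤ ∑_{j=1}^n y_j. Then 1 - ∏_{j=1}^n (1 - y_j) ≥ (1 - 1/e) · x. -/
/-! Termwise `1 - y ≤ exp (-y)` bounds the product by `exp (-∑ y) ≤ exp (-x)`, and convexity of
`exp` puts `exp (-x)` below the chord from `(0, 1)` to `(1, 1/e)` for `x ∈ [0, 1]`. -/

open Finset Real

lemma prod_one_sub_le_exp_neg_sum {ι : Type*} (s : Finset ι) (y : ι → ℝ)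
    (hy : ∀ i ∈ s, y i ≤ 1) : ∏ i ∈ s, (1 - y i) ≤ exp (-∑ i ∈ s, y i) := by
  calc ∏ i ∈ s, (1 - y i) ≤ ∏ i ∈ s, exp (-y i) :=
        prod_le_prod (fun i hi => sub_nonneg.2 (hy i hi)) fun i _ => one_sub_le_exp_neg (y i)
    _ = exp (-∑ i ∈ s, y i) := by rw [← sum_neg_distrib, exp_sum]

lemma exp_neg_le_one_sub_mul {x : ℝ} (hx0 : 0 ≤ x) (hx1 : x ≤ 1) :
    exp (-x) ≤ 1 - (1 - exp (-1)) * x := by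
  have hchord := convexOn_exp.2 (Set.mem_univ (-1)) (Set.mem_univ 0) hx0
    (sub_nonneg.2 hx1) (add_sub_cancel x 1)
  simp only [smul_eq_mul, mul_neg, mul_one, mul_zero, add_zero, exp_zero] at hchord
  linarith

theorem stmt_3 (n : ℕ) (y : Fin n → ℝ) (hy : ∀ j, 0 ≤ y j ∧ y j ≤ 1)
    (x : ℝ) (hx0 : 0 ≤ x) (hx1 : x ≤ 1) (hxy : x ≤ ∑ j, y j) :
    1 - ∏ j, (1 - y j) ≥ (1 - 1 / Real.exp 1) * x := by
  have hprod : ∏ j, (1 - y j) ≤ exp (-x) :=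
    (prod_one_sub_le_exp_neg_sum univ y fun j _ => (hy j).2).trans
      (exp_le_exp.2 (neg_le_neg hxy))
  have hchord := exp_neg_le_one_sub_mul hx0 hx1
  rw [exp_neg 1, inv_eq_one_div] at hchord
  linarith
end

section
/- Suppose two groups g₁, g₂ have LP values satisfying (1/|g₁|)∑_{l∈g₁} c_l x_l = (1/|g₂|)∑_{l∈g₂} c_l x_l with all c_l ≥ 0, x_l ≥ 0, and the common value positive. If random indicators X_l satisfy (1-1/e)x_l ≤ E[X_l] ≤ 2x_l, then the ratio of expected group averages R = [(1/|g₁|)∑_{l∈g₁} c_l E[X_l]] / [(1/|g₂|)∑_{l∈g₂} c_l E[X_l]] satisfies (1-1/e)/2 ≤ R ≤ 2/(1-1/e). -/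
/-!
Rounding changes each coordinate by at most the factors `1 - 1/e` and `2`, and nonnegative
weighted averages preserve such per-coordinate bounds. Both groups' expected averages therefore
lie in `[(1 - 1/e) S, 2 S]` for the common LP value `S`, so their ratio lies in
`[(1 - 1/e)/2, 2/(1 - 1/e)]`.
-/

open Finset Real

noncomputable def groupAvg {ι : Type*} (g : Finset ι) (c f : ι → ℝ) : ℝ :=
  (∑ l ∈ g, c l * f l) / g.card

section groupAvg

variable {ι : Type*} (g : Finset ι) {c : ι → ℝ} (hc : ∀ l, 0 ≤ c l) {f h : ι → ℝ} (κ : ℝ)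
include hc

theorem mul_groupAvg_le_groupAvg (hfh : ∀ l, κ * f l ≤ h l) :
    κ * groupAvg g c f ≤ groupAvg g c h := by
  rw [groupAvg, groupAvg, mul_div_assoc', mul_sum]
  refine div_le_div_of_nonneg_right (sum_le_sum fun l _ => ?_) g.card.cast_nonneg
  linarith [mul_le_mul_of_nonneg_left (hfh l) (hc l)]

theorem groupAvg_le_mul_groupAvg (hfh : ∀ l, f l ≤ κ * h l) :
    groupAvg g c f ≤ κ * groupAvg g c h := by
  rw [groupAvg, groupAvg, mul_div_assoc', mul_sum]
  refine div_le_div_of_nonneg_right (sum_le_sum fun l _ => ?_) g.card.cast_nonneg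
  linarith [mul_le_mul_of_nonneg_left (hfh l) (hc l)]

end groupAvg

theorem div_mem_Icc_of_mem_Icc_mul {lo hi S A B : ℝ} (hlo : 0 < lo) (hhi : 0 < hi)
    (hA : A ∈ Set.Icc (lo * S) (hi * S)) (hB : B ∈ Set.Icc (lo * S) (hi * S)) (hB₀ : 0 < B) :
    A / B ∈ Set.Icc (lo / hi) (hi / lo) := by
  have hS : 0 < S := pos_of_mul_pos_right (hB₀.trans_le hB.2) hhi.le
  constructor
  · rw [div_le_div_iff₀ hhi hB₀]
    nlinarith [hA.1, hB.2]
  · rw [div_le_div_iff₀ hB₀ hlo]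
    nlinarith [hA.2, hB.1]

theorem one_sub_inv_exp_one_pos : 0 < 1 - 1 / exp 1 :=
  sub_pos.2 ((div_lt_one (exp_pos 1)).2 (one_lt_exp_iff.2 one_pos))

theorem stmt_17_general {ι : Type*} (g₁ g₂ : Finset ι)
    (c x EX : ι → ℝ)
    (hc : ∀ l, 0 ≤ c l)
    (heq : (∑ l ∈ g₁, c l * x l) / g₁.card = (∑ l ∈ g₂, c l * x l) / g₂.card)
    (hlo : ∀ l, (1 - 1 / Real.exp 1) * x l ≤ EX l) (hhi : ∀ l, EX l ≤ 2 * x l)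
    (hden : 0 < (∑ l ∈ g₂, c l * EX l) / g₂.card) :
    (1 - 1 / Real.exp 1) / 2 ≤
      ((∑ l ∈ g₁, c l * EX l) / g₁.card) / ((∑ l ∈ g₂, c l * EX l) / g₂.card) ∧
    ((∑ l ∈ g₁, c l * EX l) / g₁.card) / ((∑ l ∈ g₂, c l * EX l) / g₂.card) ≤
      2 / (1 - 1 / Real.exp 1) := by
  have bounds : ∀ g, groupAvg g c EX ∈
      Set.Icc ((1 - 1 / exp 1) * groupAvg g c x) (2 * groupAvg g c x) := fun g =>
    ⟨mul_groupAvg_le_groupAvg g hc _ hlo, groupAvg_le_mul_groupAvg g hc _ hhi⟩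
  have bounds₁ := bounds g₁
  rw [groupAvg, heq] at bounds₁
  exact div_mem_Icc_of_mem_Icc_mul one_sub_inv_exp_one_pos two_pos bounds₁ (bounds g₂) hden

theorem stmt_17 {ι : Type*} (g₁ g₂ : Finset ι) (hg₁ : g₁.Nonempty) (hg₂ : g₂.Nonempty)
    (c x EX : ι → ℝ)
    (hc : ∀ l, 0 ≤ c l) (hx : ∀ l, 0 ≤ x l)
    (heq : (∑ l ∈ g₁, c l * x l) / g₁.card = (∑ l ∈ g₂, c l * x l) / g₂.card)
    (hpos : 0 < (∑ l ∈ g₂, c l * x l) / g₂.card)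
    (hlo : ∀ l, (1 - 1 / Real.exp 1) * x l ≤ EX l) (hhi : ∀ l, EX l ≤ 2 * x l)
    (hden : 0 < (∑ l ∈ g₂, c l * EX l) / g₂.card) :
    (1 - 1 / Real.exp 1) / 2 ≤
      ((∑ l ∈ g₁, c l * EX l) / g₁.card) / ((∑ l ∈ g₂, c l * EX l) / g₂.card) ∧
    ((∑ l ∈ g₁, c l * EX l) / g₁.card) / ((∑ l ∈ g₂, c l * EX l) / g₂.card) ≤
      2 / (1 - 1 / Real.exp 1) :=
  stmt_17_general g₁ g₂ c x EX hc heq hlo hhi hden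
end
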